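/- Let a ∈ ℝ, b > 0, c = a/b, c₀ < 0 with d = c₀ − c ≠ 0, and let ρ(x,t) = ρ¹(x,t) + ρ²(x,t) + ρ³(x,t) be the explicit solution defined below. Then for every k ∈ ℕ and t > 0, ∫_k^{k+1} ρ(x,t) dx = ((c₀−c)/d)·(Φ((k+1−at)/σ) − Φ((k−at)/σ)) − e^{c₀(c₀b−a)t} e^{c₀k} (e^{c₀} Φ(((2c₀b−a)t + k+1)/σ) − Φ(((2c₀b−a)t + k)/σ)) + (c₀/d) e^{d(db+a)t} e^{−dk} (e^{−d} Φ(((2db+a)t − (k+1))/σ) − Φ(((2db+a)t − k)/σ)) − e^{ck} (e^{c} Φ(−(k+1+at)/σ) − Φ(−(k+at)/σ)) − (c/d) e^{c₀(c₀b−a)t} e^{−dk} (e^{−d} Φ(((2c₀b−a)t − (k+1))/σ) − Φ(((2c₀b−a)t − k)/σ)). -/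

import Mathlib

/-!
Each `ρⁱ(·, t)` has an explicit primitive built from terms `e^{αx} Φ(u(x))`, `u` affine,
and the drift term `Φ((x - a t)/σ)`. Differentiating `e^{αx} Φ(u(x))` produces
`α e^{αx} Φ(u(x))` plus a density term `e^{αx} φ(u(x)) u'`; completing the square shows
that `e^{αx} φ(u(x))` is a constant multiple of `φ((x - a t)/σ)`, so the density terms
cancel against the derivative of the drift term. The cell mass is then the increment of
the primitive between `k` and `k + 1`.
-/

open MeasureTheory Set Filter Topology

/-- The standard normal cumulative distribution function `Φ`. -/
noncomputable def stdNormalCdf (z : ℝ) : ℝ :=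
  ∫ x in Iic z, (Real.sqrt (2 * Real.pi))⁻¹ * Real.exp (-x ^ 2 / 2)

/-- First part `ρ¹` of the explicit solution (with `c = a/b`, `σ = √(2bt)`). -/
noncomputable def explRho1 (a b c₀ : ℝ) (x t : ℝ) : ℝ :=
  -c₀ * Real.exp (c₀ * (c₀ * b * t + x - a * t)) *
    stdNormalCdf ((2 * c₀ * b * t + x - a * t) / Real.sqrt (2 * b * t))

/-- Second part `ρ²` of the explicit solution (with `d = c₀ − a/b`). -/
noncomputable def explRho2 (a b c₀ : ℝ) (x t : ℝ) : ℝ :=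
  -c₀ * Real.exp ((c₀ - a / b) * ((c₀ - a / b) * b * t - x + a * t)) *
    stdNormalCdf ((2 * (c₀ - a / b) * b * t - x + a * t) / Real.sqrt (2 * b * t))

/-- Third part `ρ³` of the explicit solution (with `c = a/b`). -/
noncomputable def explRho3 (a b c₀ : ℝ) (x t : ℝ) : ℝ :=
  -(a / b) * Real.exp ((a / b) * x) *
      stdNormalCdf (-(x + a * t) / Real.sqrt (2 * b * t))
  + (a / b) * Real.exp ((a / b) * x) * Real.exp (c₀ * (c₀ * b * t - x - a * t)) *
      stdNormalCdf ((2 * c₀ * b * t - x - a * t) / Real.sqrt (2 * b * t))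

/-- The explicit solution `ρ = ρ¹ + ρ² + ρ³` of the Smoluchowski equation on the
half-line with exponential initial datum `ρ₀(x) = −c₀ e^{c₀ x}`. -/
noncomputable def explRho (a b c₀ : ℝ) (x t : ℝ) : ℝ :=
  explRho1 a b c₀ x t + explRho2 a b c₀ x t + explRho3 a b c₀ x t

open Real

theorem hasDerivAt_integral_Iic {f : ℝ → ℝ} (hf : Continuous f) (hfi : Integrable f) (x : ℝ) :
    HasDerivAt (fun u => ∫ y in Iic u, f y) (f x) x := by
  have hsplit : (fun u => ∫ y in Iic u, f y)
      = fun u => (∫ y in Iic 0, f y) + ∫ y in 0..u, f y := by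
    funext u
    rw [← intervalIntegral.integral_Iic_sub_Iic hfi.integrableOn hfi.integrableOn]
    ring
  rw [hsplit]
  exact (intervalIntegral.integral_hasDerivAt_right (hf.intervalIntegrable 0 x)
    (hf.stronglyMeasurableAtFilter _ _) hf.continuousAt).const_add _

noncomputable def stdNormalPdf (z : ℝ) : ℝ := (√(2 * π))⁻¹ * exp (-z ^ 2 / 2)

theorem continuous_stdNormalPdf : Continuous stdNormalPdf := by
  unfold stdNormalPdf; fun_prop

theorem integrable_stdNormalPdf : Integrable stdNormalPdf := by
  have h := (integrable_exp_neg_mul_sq (b := 1 / 2) (by norm_num)).const_mul (√(2 * π))⁻¹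
  refine h.congr (ae_of_all _ fun z => ?_)
  simp only [stdNormalPdf]
  ring_nf

theorem hasDerivAt_stdNormalCdf (z : ℝ) : HasDerivAt stdNormalCdf (stdNormalPdf z) z :=
  hasDerivAt_integral_Iic continuous_stdNormalPdf integrable_stdNormalPdf z

@[fun_prop]
theorem continuous_stdNormalCdf : Continuous stdNormalCdf :=
  continuous_iff_continuousAt.2 fun z => (hasDerivAt_stdNormalCdf z).continuousAt

theorem exp_mul_stdNormalPdf_eq {p z w : ℝ} (h : p - z ^ 2 / 2 = -w ^ 2 / 2) :
    exp p * stdNormalPdf z = stdNormalPdf w := by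
  rw [stdNormalPdf, stdNormalPdf, ← h, mul_left_comm, ← exp_add]
  ring_nf

theorem hasDerivAt_exp_mul_stdNormalCdf {u : ℝ → ℝ} {u' x : ℝ} (hu : HasDerivAt u u' x)
    (α : ℝ) :
    HasDerivAt (fun y => exp (α * y) * stdNormalCdf (u y))
      (α * exp (α * x) * stdNormalCdf (u x) + exp (α * x) * stdNormalPdf (u x) * u') x := by
  have hexp : HasDerivAt (fun y => exp (α * y)) (exp (α * x) * α) x :=
    ((hasDerivAt_id x).const_mul α).exp.congr_deriv (by simp)
  have hΦ : HasDerivAt (fun y => stdNormalCdf (u y)) (stdNormalPdf (u x) * u') x :=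
    (hasDerivAt_stdNormalCdf (u x)).comp x hu
  exact (hexp.mul hΦ).congr_deriv (by ring)

noncomputable def explRho1Primitive (a b c₀ : ℝ) (x t : ℝ) : ℝ :=
  stdNormalCdf ((x - a * t) / √(2 * b * t))
    - exp (c₀ * (c₀ * b - a) * t) *
      (exp (c₀ * x) * stdNormalCdf (((2 * c₀ * b - a) * t + x) / √(2 * b * t)))

noncomputable def explRho2Primitive (a b c₀ : ℝ) (x t : ℝ) : ℝ :=
  c₀ / (c₀ - a / b) *
    (exp ((c₀ - a / b) * ((c₀ - a / b) * b + a) * t) *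
        (exp (-(c₀ - a / b) * x) *
          stdNormalCdf (((2 * (c₀ - a / b) * b + a) * t - x) / √(2 * b * t)))
      + stdNormalCdf ((x - a * t) / √(2 * b * t)))

noncomputable def explRho3Primitive (a b c₀ : ℝ) (x t : ℝ) : ℝ :=
  -(exp (a / b * x) * stdNormalCdf (-(x + a * t) / √(2 * b * t)))
    - stdNormalCdf ((x - a * t) / √(2 * b * t))
    - a / b / (c₀ - a / b) *
      (exp (c₀ * (c₀ * b - a) * t) *
          (exp (-(c₀ - a / b) * x) *
            stdNormalCdf (((2 * c₀ * b - a) * t - x) / √(2 * b * t)))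
        + stdNormalCdf ((x - a * t) / √(2 * b * t)))

section Primitives

variable {a b c₀ t : ℝ}

local notation "σ" => √(2 * b * t)

theorem hasDerivAt_stdNormalCdf_drift (x : ℝ) :
    HasDerivAt (fun y => stdNormalCdf ((y - a * t) / σ))
      (stdNormalPdf ((x - a * t) / σ) / σ) x :=
  ((hasDerivAt_stdNormalCdf _).comp x
    (((hasDerivAt_id' x).sub_const _).div_const σ)).congr_deriv (by ring)

variable (hb : 0 < b) (ht : 0 < t)
include hb ht

theorem exp_mul_stdNormalPdf_div_sqrt {p u w : ℝ} (h : 4 * b * t * p - u ^ 2 = -w ^ 2) :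
    exp p * stdNormalPdf (u / σ) = stdNormalPdf (w / σ) := by
  have hσ2 : σ ^ 2 = 2 * b * t := sq_sqrt (by positivity)
  refine exp_mul_stdNormalPdf_eq ?_
  rw [div_pow, div_pow, hσ2]
  field_simp
  linear_combination h

theorem hasDerivAt_explRho1Primitive (x : ℝ) :
    HasDerivAt (fun y => explRho1Primitive a b c₀ y t) (explRho1 a b c₀ x t) x := by
  have hterm := (hasDerivAt_exp_mul_stdNormalCdf
    (((hasDerivAt_id' x).const_add ((2 * c₀ * b - a) * t)).div_const σ) c₀).const_mul
      (exp (c₀ * (c₀ * b - a) * t))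
  have htilt := exp_mul_stdNormalPdf_div_sqrt hb ht (p := c₀ * (c₀ * b - a) * t + c₀ * x)
    (u := (2 * c₀ * b - a) * t + x) (w := x - a * t) (by ring)
  refine ((hasDerivAt_stdNormalCdf_drift x).sub hterm).congr_deriv ?_
  rw [explRho1, ← htilt, show 2 * c₀ * b * t + x - a * t = (2 * c₀ * b - a) * t + x by ring,
    show c₀ * (c₀ * b * t + x - a * t) = c₀ * (c₀ * b - a) * t + c₀ * x by ring, exp_add]
  ring

theorem hasDerivAt_explRho2Primitive (hd : c₀ - a / b ≠ 0) (x : ℝ) :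
    HasDerivAt (fun y => explRho2Primitive a b c₀ y t) (explRho2 a b c₀ x t) x := by
  set d := c₀ - a / b
  have hterm := (hasDerivAt_exp_mul_stdNormalCdf
    (((hasDerivAt_id' x).const_sub ((2 * d * b + a) * t)).div_const σ) (-d)).const_mul
      (exp (d * (d * b + a) * t))
  have htilt := exp_mul_stdNormalPdf_div_sqrt hb ht (p := d * (d * b + a) * t + -d * x)
    (u := (2 * d * b + a) * t - x) (w := x - a * t) (by ring)
  refine ((hterm.add (hasDerivAt_stdNormalCdf_drift x)).const_mul (c₀ / d)).congr_deriv ?_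
  rw [explRho2, ← htilt, show 2 * d * b * t - x + a * t = (2 * d * b + a) * t - x by ring,
    show d * (d * b * t - x + a * t) = d * (d * b + a) * t + -d * x by ring, exp_add]
  field_simp
  ring

theorem hasDerivAt_explRho3Primitive (hd : c₀ - a / b ≠ 0) (x : ℝ) :
    HasDerivAt (fun y => explRho3Primitive a b c₀ y t) (explRho3 a b c₀ x t) x := by
  have hb0 : b ≠ 0 := hb.ne'
  set d := c₀ - a / b with hd_def
  have hreflected := hasDerivAt_exp_mul_stdNormalCdf
    ((((hasDerivAt_id' x).add_const (a * t)).fun_neg).div_const σ) (a / b)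
  have hterm := (hasDerivAt_exp_mul_stdNormalCdf
    (((hasDerivAt_id' x).const_sub ((2 * c₀ * b - a) * t)).div_const σ) (-d)).const_mul
      (exp (c₀ * (c₀ * b - a) * t))
  have htilt₁ := exp_mul_stdNormalPdf_div_sqrt hb ht (p := a / b * x)
    (u := -(x + a * t)) (w := x - a * t) (by field_simp; ring)
  have htilt₂ := exp_mul_stdNormalPdf_div_sqrt hb ht
    (p := c₀ * (c₀ * b - a) * t + -d * x) (u := (2 * c₀ * b - a) * t - x) (w := x - a * t)
    (by rw [hd_def]; field_simp; ring)
  rw [exp_add] at htilt₂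
  have hexp : exp (a / b * x) * exp (c₀ * (c₀ * b * t - x - a * t))
      = exp (c₀ * (c₀ * b - a) * t) * exp (-d * x) := by
    rw [← exp_add, ← exp_add, hd_def]; ring_nf
  refine ((hreflected.fun_neg.sub (hasDerivAt_stdNormalCdf_drift x)).sub
    ((hterm.add (hasDerivAt_stdNormalCdf_drift x)).const_mul (a / b / d))).congr_deriv ?_
  rw [explRho3, show 2 * c₀ * b * t - x - a * t = (2 * c₀ * b - a) * t - x by ring]
  linear_combination (1 / σ) * htilt₁ + (a / b / d / σ) * htilt₂
    - a / b * stdNormalCdf (((2 * c₀ * b - a) * t - x) / σ) * hexp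
    + a / b * stdNormalCdf (((2 * c₀ * b - a) * t - x) / σ) * exp (c₀ * (c₀ * b - a) * t)
      * exp (-d * x) * mul_inv_cancel₀ hd

end Primitives

theorem continuous_explRho (a b c₀ t : ℝ) : Continuous fun x => explRho a b c₀ x t := by
  unfold explRho explRho1 explRho2 explRho3
  fun_prop

theorem stmt_13_general (a b c₀ : ℝ) (hb : 0 < b)
    (c d : ℝ) (hc : c = a / b) (hd : d = c₀ - c) (hd0 : d ≠ 0) :
    ∀ k : ℕ, ∀ t > (0:ℝ),
      (∫ x in (k : ℝ)..((k : ℝ) + 1), explRho a b c₀ x t)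
        = (c₀ - c) / d *
            (stdNormalCdf (((k : ℝ) + 1 - a * t) / Real.sqrt (2 * b * t))
              - stdNormalCdf (((k : ℝ) - a * t) / Real.sqrt (2 * b * t)))
        - Real.exp (c₀ * (c₀ * b - a) * t) * Real.exp (c₀ * (k : ℝ)) *
            (Real.exp c₀ *
                stdNormalCdf (((2 * c₀ * b - a) * t + ((k : ℝ) + 1)) / Real.sqrt (2 * b * t))
              - stdNormalCdf (((2 * c₀ * b - a) * t + (k : ℝ)) / Real.sqrt (2 * b * t)))
        + c₀ / d * Real.exp (d * (d * b + a) * t) * Real.exp (-d * (k : ℝ)) *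
            (Real.exp (-d) *
                stdNormalCdf (((2 * d * b + a) * t - ((k : ℝ) + 1)) / Real.sqrt (2 * b * t))
              - stdNormalCdf (((2 * d * b + a) * t - (k : ℝ)) / Real.sqrt (2 * b * t)))
        - Real.exp (c * (k : ℝ)) *
            (Real.exp c *
                stdNormalCdf (-(((k : ℝ) + 1) + a * t) / Real.sqrt (2 * b * t))
              - stdNormalCdf (-((k : ℝ) + a * t) / Real.sqrt (2 * b * t)))
        - c / d * Real.exp (c₀ * (c₀ * b - a) * t) * Real.exp (-d * (k : ℝ)) *
            (Real.exp (-d) *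
                stdNormalCdf (((2 * c₀ * b - a) * t - ((k : ℝ) + 1)) / Real.sqrt (2 * b * t))
              - stdNormalCdf (((2 * c₀ * b - a) * t - (k : ℝ)) / Real.sqrt (2 * b * t))) := by
  subst hc hd
  intro k t ht
  have hF : ∀ x, HasDerivAt _ (explRho a b c₀ x t) x := fun x =>
    ((hasDerivAt_explRho1Primitive hb ht x).add (hasDerivAt_explRho2Primitive hb ht hd0 x)).add
      (hasDerivAt_explRho3Primitive hb ht hd0 x)
  rw [intervalIntegral.integral_eq_sub_of_hasDerivAt (fun x _ => hF x)
    ((continuous_explRho a b c₀ t).intervalIntegrable _ _)]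
  simp only [Pi.add_apply, explRho1Primitive, explRho2Primitive, explRho3Primitive,
    mul_add_one, exp_add]
  ring

/-- Closed-form expression for the cell masses `∫_k^{k+1} ρ(x,t) dx` of the
explicit solution: the continuous approximation `p_k^A(t)`. -/
theorem stmt_13 (a b c₀ : ℝ) (hb : 0 < b) (hc₀ : c₀ < 0)
    (c d : ℝ) (hc : c = a / b) (hd : d = c₀ - c) (hd0 : d ≠ 0) :
    ∀ k : ℕ, ∀ t > (0:ℝ),
      (∫ x in (k : ℝ)..((k : ℝ) + 1), explRho a b c₀ x t)
        = (c₀ - c) / d *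
            (stdNormalCdf (((k : ℝ) + 1 - a * t) / Real.sqrt (2 * b * t))
              - stdNormalCdf (((k : ℝ) - a * t) / Real.sqrt (2 * b * t)))
        - Real.exp (c₀ * (c₀ * b - a) * t) * Real.exp (c₀ * (k : ℝ)) *
            (Real.exp c₀ *
                stdNormalCdf (((2 * c₀ * b - a) * t + ((k : ℝ) + 1)) / Real.sqrt (2 * b * t))
              - stdNormalCdf (((2 * c₀ * b - a) * t + (k : ℝ)) / Real.sqrt (2 * b * t)))
        + c₀ / d * Real.exp (d * (d * b + a) * t) * Real.exp (-d * (k : ℝ)) *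
            (Real.exp (-d) *
                stdNormalCdf (((2 * d * b + a) * t - ((k : ℝ) + 1)) / Real.sqrt (2 * b * t))
              - stdNormalCdf (((2 * d * b + a) * t - (k : ℝ)) / Real.sqrt (2 * b * t)))
        - Real.exp (c * (k : ℝ)) *
            (Real.exp c *
                stdNormalCdf (-(((k : ℝ) + 1) + a * t) / Real.sqrt (2 * b * t))
              - stdNormalCdf (-((k : ℝ) + a * t) / Real.sqrt (2 * b * t)))
        - c / d * Real.exp (c₀ * (c₀ * b - a) * t) * Real.exp (-d * (k : ℝ)) *
            (Real.exp (-d) *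
                stdNormalCdf (((2 * c₀ * b - a) * t - ((k : ℝ) + 1)) / Real.sqrt (2 * b * t))
              - stdNormalCdf (((2 * c₀ * b - a) * t - (k : ℝ)) / Real.sqrt (2 * b * t))) :=
  stmt_13_general a b c₀ hb c d hc hd hd0
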